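/- arXiv:2407.12149 — 7 statements merged into one kernel-verified Lean document; each statement's English description precedes it below -/
import Mathlib

section
/- Let A be a symmetric invertible n×n real matrix and let M, N be n×n matrices with A = M - N and M invertible. Then with S := M⁻¹N, we have M⁻¹(Mᵀ + N)M⁻ᵀ = A⁻¹ - S A⁻¹ Sᵀ. -/
open Matrix

/-- For a symmetric invertible matrix `A = M - N` with `M` invertible,
and `S := M⁻¹ * N`, one has `M⁻¹ (Mᵀ + N) (Mᵀ)⁻¹ = A⁻¹ - S A⁻¹ Sᵀ`. -/
theorem matrix_splitting_identity {n : ℕ} (A M N : Matrix (Fin n) (Fin n) ℝ)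
    (hA : A.IsSymm) (hAinv : IsUnit A.det) (hMinv : IsUnit M.det)
    (hMN : A = M - N) :
    M⁻¹ * (Mᵀ + N) * (Mᵀ)⁻¹ = A⁻¹ - (M⁻¹ * N) * A⁻¹ * (M⁻¹ * N)ᵀ := by
  have hN : N = M - A := by rw [hMN]; abel
  have hNT : Nᵀ = Mᵀ - A := by rw [hN, transpose_sub, hA.eq]
  have h1 : A⁻¹ * A = 1 := nonsing_inv_mul A hAinv
  have h2 : A * A⁻¹ = 1 := mul_nonsing_inv A hAinv
  have hMi : M⁻¹ * M = 1 := nonsing_inv_mul M hMinv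
  have hMTdet : IsUnit Mᵀ.det := by rwa [det_transpose]
  have hMTi : Mᵀ * (Mᵀ)⁻¹ = 1 := mul_nonsing_inv Mᵀ hMTdet
  have key : Mᵀ + N = M * A⁻¹ * Mᵀ - N * A⁻¹ * Nᵀ := by
    have : N * A⁻¹ * Nᵀ = (M - A) * A⁻¹ * (Mᵀ - A) := by rw [← hN, ← hNT]
    rw [this]
    have expand : (M - A) * A⁻¹ * (Mᵀ - A)
        = M * A⁻¹ * Mᵀ - M * (A⁻¹ * A) - (A * A⁻¹) * Mᵀ + (A * A⁻¹) * A := by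
      noncomm_ring
    rw [expand, h1, h2, hN]
    noncomm_ring
  calc M⁻¹ * (Mᵀ + N) * (Mᵀ)⁻¹
      = M⁻¹ * (M * A⁻¹ * Mᵀ - N * A⁻¹ * Nᵀ) * (Mᵀ)⁻¹ := by rw [key]
    _ = (M⁻¹ * M) * A⁻¹ * (Mᵀ * (Mᵀ)⁻¹) - (M⁻¹ * N) * A⁻¹ * (Nᵀ * (Mᵀ)⁻¹) := by
        noncomm_ring
    _ = A⁻¹ - (M⁻¹ * N) * A⁻¹ * (M⁻¹ * N)ᵀ := by
        rw [hMi, hMTi, transpose_mul, transpose_nonsing_inv]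
        noncomm_ring
end

section
/- Let ξ₁, ξ₂ be independent random vectors each distributed as N(0, M + Mᵀ - A), with A symmetric and M, M + Mᵀ - A invertible, and set M^{sym} := M(M + Mᵀ - A)⁻¹Mᵀ. Define ξ by (M^{sym})⁻¹ξ = (M⁻¹ - M⁻ᵀAM⁻¹)ξ₁ + M⁻ᵀξ₂. Then ξ ~ N(0, 2M^{sym} - A). -/
open Matrix MeasureTheory ProbabilityTheory

/-- A measure `μ` on `ℝⁿ` is the Gaussian law `N(m, S)`, characterised by its
characteristic function. -/
def IsGaussianLaw {n : ℕ} (μ : Measure (Fin n → ℝ)) (m : Fin n → ℝ)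
    (S : Matrix (Fin n) (Fin n) ℝ) : Prop :=
  IsProbabilityMeasure μ ∧
    ∀ t : Fin n → ℝ,
      ∫ x, Complex.exp (Complex.I * ((t ⬝ᵥ x : ℝ) : ℂ)) ∂μ
        = Complex.exp (Complex.I * ((t ⬝ᵥ m : ℝ) : ℂ) - ((t ⬝ᵥ S.mulVec t : ℝ) : ℂ) / 2)

lemma aux_gaussian_sum {n : ℕ} {Ω : Type*} [MeasurableSpace Ω]
    (P : Measure Ω) [IsProbabilityMeasure P]
    (C₁ C₂ S : Matrix (Fin n) (Fin n) ℝ)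
    (ξ₁ ξ₂ : Ω → Fin n → ℝ) (h1m : Measurable ξ₁) (h2m : Measurable ξ₂)
    (hind : IndepFun ξ₁ ξ₂ P)
    (hξ₁ : IsGaussianLaw (Measure.map ξ₁ P) 0 S)
    (hξ₂ : IsGaussianLaw (Measure.map ξ₂ P) 0 S)
    (R : Matrix (Fin n) (Fin n) ℝ)
    (hkey : C₁ * S * C₁ᵀ + C₂ * S * C₂ᵀ = R) :
    IsGaussianLaw
      (Measure.map (fun ω => C₁.mulVec (ξ₁ ω) + C₂.mulVec (ξ₂ ω)) P) 0 R := by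
  have hmv : ∀ (C : Matrix (Fin n) (Fin n) ℝ), Measurable fun v : Fin n → ℝ => C.mulVec v :=
    fun C => (LinearMap.continuous_of_finiteDimensional C.mulVecLin).measurable
  set g : (Fin n → ℝ) × (Fin n → ℝ) → (Fin n → ℝ) :=
    fun p => C₁.mulVec p.1 + C₂.mulVec p.2 with hg
  have hgm : Measurable g := ((hmv C₁).comp measurable_fst).add ((hmv C₂).comp measurable_snd)
  have hmap : Measure.map (fun ω => (ξ₁ ω, ξ₂ ω)) P
      = (Measure.map ξ₁ P).prod (Measure.map ξ₂ P) :=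
    (indepFun_iff_map_prod_eq_prod_map_map h1m.aemeasurable h2m.aemeasurable).mp hind
  have hmeq : Measure.map (fun ω => C₁.mulVec (ξ₁ ω) + C₂.mulVec (ξ₂ ω)) P
      = Measure.map g ((Measure.map ξ₁ P).prod (Measure.map ξ₂ P)) := by
    rw [← hmap, Measure.map_map hgm (h1m.prodMk h2m)]
    rfl
  haveI := hξ₁.1
  haveI := hξ₂.1
  have hdotm : ∀ w : Fin n → ℝ, Measurable fun x : Fin n → ℝ => (w ⬝ᵥ x : ℝ) := by
    intro w
    simp only [dotProduct]
    exact Finset.measurable_sum _ fun i _ => (measurable_pi_apply i).const_mul _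
  have hem : ∀ w : Fin n → ℝ,
      Measurable fun x : Fin n → ℝ => Complex.exp (Complex.I * ((w ⬝ᵥ x : ℝ) : ℂ)) := by
    intro w
    exact Complex.measurable_exp.comp ((Complex.measurable_ofReal.comp (hdotm w)).const_mul _)
  have hdot : ∀ (C : Matrix (Fin n) (Fin n) ℝ) (w x : Fin n → ℝ),
      w ⬝ᵥ C.mulVec x = Cᵀ.mulVec w ⬝ᵥ x := by
    intro C w x
    rw [Matrix.dotProduct_mulVec, ← Matrix.mulVec_transpose]
  constructor
  · rw [hmeq]
    exact Measure.isProbabilityMeasure_map hgm.aemeasurable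
  · intro t
    rw [hmeq, integral_map hgm.aemeasurable (hem t).aestronglyMeasurable]
    have hsplit : ∀ p : (Fin n → ℝ) × (Fin n → ℝ),
        Complex.exp (Complex.I * ((t ⬝ᵥ g p : ℝ) : ℂ))
          = Complex.exp (Complex.I * ((C₁ᵀ.mulVec t ⬝ᵥ p.1 : ℝ) : ℂ))
            * Complex.exp (Complex.I * ((C₂ᵀ.mulVec t ⬝ᵥ p.2 : ℝ) : ℂ)) := by
      intro p
      rw [← Complex.exp_add, ← mul_add, ← Complex.ofReal_add]
      have h : (t ⬝ᵥ g p) = C₁ᵀ.mulVec t ⬝ᵥ p.1 + C₂ᵀ.mulVec t ⬝ᵥ p.2 := by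
        simp only [hg, dotProduct_add, hdot]
      rw [h]
    simp_rw [hsplit]
    rw [integral_prod_mul (μ := Measure.map ξ₁ P) (ν := Measure.map ξ₂ P)
        (fun a => Complex.exp (Complex.I * ((C₁ᵀ.mulVec t ⬝ᵥ a : ℝ) : ℂ)))
        (fun a => Complex.exp (Complex.I * ((C₂ᵀ.mulVec t ⬝ᵥ a : ℝ) : ℂ))), hξ₁.2 (C₁ᵀ.mulVec t), hξ₂.2 (C₂ᵀ.mulVec t), ← Complex.exp_add]
    have hterm : ∀ (C : Matrix (Fin n) (Fin n) ℝ),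
        t ⬝ᵥ (C * S * Cᵀ).mulVec t = (Cᵀ.mulVec t) ⬝ᵥ S.mulVec (Cᵀ.mulVec t) := by
      intro C
      rw [← Matrix.mulVec_mulVec, ← Matrix.mulVec_mulVec, hdot]
    have hq : (C₁ᵀ.mulVec t) ⬝ᵥ S.mulVec (C₁ᵀ.mulVec t)
        + (C₂ᵀ.mulVec t) ⬝ᵥ S.mulVec (C₂ᵀ.mulVec t) = t ⬝ᵥ R.mulVec t := by
      rw [← hkey, Matrix.add_mulVec, dotProduct_add, hterm, hterm]
    simp only [dotProduct_zero, Complex.ofReal_zero, mul_zero, zero_sub]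
    rw [← hq]
    push_cast
    ring_nf

/-- If `ξ₁, ξ₂ ~ N(0, M + Mᵀ - A)` are independent, `A` symmetric,
`M` invertible, `M + Mᵀ - A` positive definite, and `M^{sym} = M (M + Mᵀ - A)⁻¹ Mᵀ`, then
the vector `ξ` defined by `(M^{sym})⁻¹ ξ = (M⁻¹ - M⁻ᵀ A M⁻¹) ξ₁ + M⁻ᵀ ξ₂`, i.e.
`ξ = M^{sym} ((M⁻¹ - M⁻ᵀ A M⁻¹) ξ₁ + M⁻ᵀ ξ₂)`, satisfies `ξ ~ N(0, 2 M^{sym} - A)`. -/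
theorem symmetrised_noise_law {n : ℕ} {Ω : Type*} [MeasurableSpace Ω]
    (P : Measure Ω) [IsProbabilityMeasure P]
    (A M : Matrix (Fin n) (Fin n) ℝ)
    (hAs : A.IsSymm) (hM : IsUnit M.det) (hPD : (M + Mᵀ - A).PosDef)
    (ξ₁ ξ₂ : Ω → Fin n → ℝ) (h1m : Measurable ξ₁) (h2m : Measurable ξ₂)
    (hind : IndepFun ξ₁ ξ₂ P)
    (hξ₁ : IsGaussianLaw (Measure.map ξ₁ P) 0 (M + Mᵀ - A))
    (hξ₂ : IsGaussianLaw (Measure.map ξ₂ P) 0 (M + Mᵀ - A)) :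
    IsGaussianLaw
      (Measure.map (fun ω =>
        (M * (M + Mᵀ - A)⁻¹ * Mᵀ).mulVec
          ((M⁻¹ - (Mᵀ)⁻¹ * A * M⁻¹).mulVec (ξ₁ ω) + (Mᵀ)⁻¹.mulVec (ξ₂ ω))) P)
      0 ((2 : ℝ) • (M * (M + Mᵀ - A)⁻¹ * Mᵀ) - A) := by
  set S := M + Mᵀ - A with hSdef
  have hST : Sᵀ = S := by
    simp only [hSdef, Matrix.transpose_sub, Matrix.transpose_add, Matrix.transpose_transpose,
      hAs.eq]
    abel
  have hSdet : IsUnit S.det := (Matrix.isUnit_iff_isUnit_det _).mp hPD.isUnit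
  have hMT : IsUnit Mᵀ.det := Matrix.isUnit_det_transpose _ hM
  have hMM : M * M⁻¹ = 1 := Matrix.mul_nonsing_inv M hM
  have hSS : S * S⁻¹ = 1 := Matrix.mul_nonsing_inv _ hSdet
  have hSS' : S⁻¹ * S = 1 := Matrix.nonsing_inv_mul _ hSdet
  have hSiT : (S⁻¹)ᵀ = S⁻¹ := by rw [Matrix.transpose_nonsing_inv, hST]
  set Q := M * S⁻¹ * Mᵀ with hQdef
  set C₁ := Q * (M⁻¹ - Mᵀ⁻¹ * A * M⁻¹) with hC₁def
  set C₂ := Q * Mᵀ⁻¹ with hC₂def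
  have hC₂ : C₂ = M * S⁻¹ := by
    rw [hC₂def, hQdef, Matrix.mul_assoc, Matrix.mul_nonsing_inv _ hMT, Matrix.mul_one]
  have hstep : Mᵀ * (M⁻¹ - Mᵀ⁻¹ * A * M⁻¹) = (S - M) * M⁻¹ := by
    rw [Matrix.mul_sub, Matrix.mul_assoc Mᵀ⁻¹ A M⁻¹, Matrix.mul_nonsing_inv_cancel_left _ _ hMT,
      ← Matrix.sub_mul]
    congr 1
    rw [hSdef]; abel
  have hC₁ : C₁ = 1 - M * S⁻¹ := by
    rw [hC₁def, hQdef, Matrix.mul_assoc (M * S⁻¹) Mᵀ _, hstep, Matrix.sub_mul,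
      Matrix.mul_sub, ← Matrix.mul_assoc (M * S⁻¹) S M⁻¹, Matrix.mul_assoc M S⁻¹ S, hSS',
      Matrix.mul_one, hMM, Matrix.mul_one]
  have hkey : C₁ * S * C₁ᵀ + C₂ * S * C₂ᵀ = (2:ℝ) • Q - A := by
    rw [hC₁, hC₂]
    have h2 : (M * S⁻¹)ᵀ = S⁻¹ * Mᵀ := by rw [Matrix.transpose_mul, hSiT]
    have h1 : (1 - M * S⁻¹)ᵀ = 1 - S⁻¹ * Mᵀ := by
      rw [Matrix.transpose_sub, Matrix.transpose_one, h2]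
    have hMS : M * S⁻¹ * S = M := by rw [Matrix.mul_assoc, hSS', Matrix.mul_one]
    have hSSM : S * (S⁻¹ * Mᵀ) = Mᵀ := by rw [← Matrix.mul_assoc, hSS, Matrix.one_mul]
    rw [h1, h2, Matrix.sub_mul, Matrix.one_mul, hMS, Matrix.mul_sub (S - M), Matrix.mul_one,
      Matrix.sub_mul S M (S⁻¹ * Mᵀ), hSSM, ← Matrix.mul_assoc M S⁻¹ Mᵀ, ← hQdef,
      two_smul ℝ Q, hSdef]
    abel
  have hfun : (fun ω =>
        Q.mulVec ((M⁻¹ - (Mᵀ)⁻¹ * A * M⁻¹).mulVec (ξ₁ ω) + (Mᵀ)⁻¹.mulVec (ξ₂ ω)))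
      = fun ω => C₁.mulVec (ξ₁ ω) + C₂.mulVec (ξ₂ ω) := by
    funext ω
    simp only [hC₁def, hC₂def, Matrix.mulVec_add, Matrix.mulVec_mulVec]
  rw [hfun]
  exact aux_gaussian_sum P C₁ C₂ S ξ₁ ξ₂ h1m h2m hind hξ₁ hξ₂ _ hkey
end

section
/- Let p_ℓ(θ) dθ = Z_ℓ⁻¹ h_ℓ(θ) dθ be a probability density on ℝ^{n_ℓ} with h_ℓ nonnegative, and let I be an n_ℓ × n_{ℓ-1} matrix. Let Θ have density p_ℓ and, conditional on Θ = θ, let Ψ have density p_{ℓ-1}(ψ|θ) = h_ℓ(θ + Iψ)/Z*(θ) where Z*(θ) = ∫ h_ℓ(θ + Iψ) dψ, assumed finite and positive for all θ. Then Θ + IΨ has the same distribution as Θ. -/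
open Matrix MeasureTheory
open scoped ENNReal

/-- (Liu–Sabatti partial resampling invariance.) Let `h ≥ 0` on `ℝ^{nf}`
with `0 < Z = ∫ h < ∞`, let `I` be an `nf × nc` matrix, and define the joint density
`p(θ, ψ) = (h θ / Z) · (h(θ + I ψ) / Z*(θ))` where `Z*(θ) = ∫ h(θ + I ψ) dψ ∈ (0, ∞)`.
Then the law of `θ + I ψ` under the joint distribution equals the law of `θ`, i.e. the
distribution with density `h / Z`. -/
theorem coarse_update_invariance {nf nc : ℕ}
    (h : (Fin nf → ℝ) → ℝ) (hmeas : Measurable h) (hpos : ∀ x, 0 ≤ h x)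
    (Z : ℝ) (hZ : Z = ∫ x, h x) (hZpos : 0 < Z) (hint : Integrable h)
    (I : Matrix (Fin nf) (Fin nc) ℝ)
    (Zs : (Fin nf → ℝ) → ℝ) (hZs : ∀ θ, Zs θ = ∫ ψ, h (θ + I.mulVec ψ))
    (hZspos : ∀ θ, 0 < Zs θ)
    (hZsint : ∀ θ, Integrable (fun ψ : Fin nc → ℝ => h (θ + I.mulVec ψ))) :
    Measure.map (fun p : (Fin nf → ℝ) × (Fin nc → ℝ) => p.1 + I.mulVec p.2)
        ((volume : Measure ((Fin nf → ℝ) × (Fin nc → ℝ))).withDensity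
          (fun p => ENNReal.ofReal (h p.1 / Z * (h (p.1 + I.mulVec p.2) / Zs p.1))))
      = (volume : Measure (Fin nf → ℝ)).withDensity
          (fun x => ENNReal.ofReal (h x / Z)) := by
  -- basic measurability facts
  have hIm : Measurable fun ψ : Fin nc → ℝ => I.mulVec ψ :=
    I.mulVecLin.continuous_on_pi.measurable
  have hfm : Measurable fun p : (Fin nf → ℝ) × (Fin nc → ℝ) => p.1 + I.mulVec p.2 :=
    measurable_fst.add (hIm.comp measurable_snd)
  have hJ : Measurable fun p : (Fin nf → ℝ) × (Fin nc → ℝ) => h (p.1 + I.mulVec p.2) :=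
    hmeas.comp hfm
  have hZsm : Measurable Zs := by
    have h1 : StronglyMeasurable fun θ : Fin nf → ℝ =>
        ∫ ψ : Fin nc → ℝ, h (θ + I.mulVec ψ) :=
      StronglyMeasurable.integral_prod_right' (f := fun p : (Fin nf → ℝ) × (Fin nc → ℝ) =>
        h (p.1 + I.mulVec p.2)) hJ.stronglyMeasurable
    have : Zs = fun θ => ∫ ψ : Fin nc → ℝ, h (θ + I.mulVec ψ) := funext hZs
    rw [this]; exact h1.measurable
  -- translation invariance of Zs
  have hZsinv : ∀ θ ψ, Zs (θ - I.mulVec ψ) = Zs θ := by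
    intro θ ψ
    rw [hZs, hZs]
    have e : ∀ ψ' : Fin nc → ℝ, θ - I.mulVec ψ + I.mulVec ψ' = θ + I.mulVec (ψ' - ψ) := by
      intro ψ'; rw [Matrix.mulVec_sub]; abel
    simp_rw [e]
    exact integral_sub_right_eq_self (fun u => h (θ + I.mulVec u)) ψ
  -- negated integral
  have hZsneg : ∀ θ, (∫ ψ : Fin nc → ℝ, h (θ - I.mulVec ψ)) = Zs θ := by
    intro θ
    rw [hZs]
    have e : ∀ ψ : Fin nc → ℝ, θ - I.mulVec ψ = θ + I.mulVec (-ψ) := by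
      intro ψ; rw [Matrix.mulVec_neg]; abel
    simp_rw [e]
    exact integral_neg_eq_self (fun u => h (θ + I.mulVec u)) volume
  have hnegint : ∀ θ, Integrable (fun ψ : Fin nc → ℝ => h (θ - I.mulVec ψ)) := by
    intro θ
    have h2 := (hZsint θ).comp_neg
    simp only [Matrix.mulVec_neg, ← sub_eq_add_neg] at h2
    exact h2
  -- the density
  set g : (Fin nf → ℝ) × (Fin nc → ℝ) → ℝ≥0∞ := fun p =>
    ENNReal.ofReal (h p.1 / Z * (h (p.1 + I.mulVec p.2) / Zs p.1)) with hg
  have hgm : Measurable g :=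
    ((hmeas.comp measurable_fst).div_const Z |>.mul
      (hJ.div (hZsm.comp measurable_fst))).ennreal_ofReal
  ext s hs
  rw [Measure.map_apply hfm hs, withDensity_apply _ (hfm hs), withDensity_apply _ hs]
  -- express LHS as full lintegral of F over the product
  set F : (Fin nf → ℝ) → (Fin nc → ℝ) → ℝ≥0∞ := fun θ ψ =>
    s.indicator (fun _ => (1 : ℝ≥0∞)) (θ + I.mulVec ψ) *
      ENNReal.ofReal (h θ / Z * (h (θ + I.mulVec ψ) / Zs θ)) with hF
  have hFunc : Function.uncurry F = fun p : (Fin nf → ℝ) × (Fin nc → ℝ) =>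
      s.indicator (fun _ => (1 : ℝ≥0∞)) (p.1 + I.mulVec p.2) * g p := rfl
  have hFm : Measurable (Function.uncurry F) := by
    rw [hFunc]
    exact ((measurable_const.indicator hs).comp hfm).mul hgm
  have step1 : ∫⁻ p in (fun p : (Fin nf → ℝ) × (Fin nc → ℝ) =>
      p.1 + I.mulVec p.2) ⁻¹' s, g p
      = ∫⁻ θ, ∫⁻ ψ, F θ ψ := by
    rw [← lintegral_indicator (hfm hs) g]
    have e : ∀ p : (Fin nf → ℝ) × (Fin nc → ℝ),
        ((fun p : (Fin nf → ℝ) × (Fin nc → ℝ) => p.1 + I.mulVec p.2) ⁻¹' s).indicator g p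
          = Function.uncurry F p := by
      intro p
      by_cases hp : p.1 + I.mulVec p.2 ∈ s <;>
        simp [F, g, Function.uncurry, Set.indicator_apply, hp, Set.mem_preimage]
    rw [lintegral_congr e, Measure.volume_eq_prod, lintegral_prod _ hFm.aemeasurable]
    rfl
  -- shear change of variables via Fubini + translation invariance
  set G : (Fin nf → ℝ) → (Fin nc → ℝ) → ℝ≥0∞ := fun θ ψ => F (θ - I.mulVec ψ) ψ with hG
  have hGm : Measurable (Function.uncurry G) := by
    have hT : Measurable fun p : (Fin nf → ℝ) × (Fin nc → ℝ) =>
        ((p.1 - I.mulVec p.2, p.2) : (Fin nf → ℝ) × (Fin nc → ℝ)) :=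
      (measurable_fst.sub (hIm.comp measurable_snd)).prodMk measurable_snd
    exact hFm.comp hT
  have step2 : (∫⁻ θ, ∫⁻ ψ, F θ ψ) = ∫⁻ θ, ∫⁻ ψ, G θ ψ := by
    rw [lintegral_lintegral_swap hFm.aemeasurable,
        lintegral_lintegral_swap hGm.aemeasurable]
    refine lintegral_congr fun ψ => ?_
    have h2 := lintegral_add_right_eq_self (μ := (volume : Measure (Fin nf → ℝ)))
      (fun θ => F θ ψ) (-(I.mulVec ψ))
    simp only [← sub_eq_add_neg] at h2
    exact h2.symm
  -- compute the inner integral of G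
  have step3 : ∀ θ, (∫⁻ ψ, G θ ψ)
      = s.indicator (fun _ => (1 : ℝ≥0∞)) θ * ENNReal.ofReal (h θ / Z) := by
    intro θ
    have hGval : ∀ ψ, G θ ψ = s.indicator (fun _ => (1 : ℝ≥0∞)) θ *
        (ENNReal.ofReal (h (θ - I.mulVec ψ)) *
          ENNReal.ofReal (h θ / (Z * Zs θ))) := by
      intro ψ
      simp only [G, F, sub_add_cancel, hZsinv]
      congr 1
      rw [← ENNReal.ofReal_mul (hpos _)]
      congr 1
      ring
    calc (∫⁻ ψ, G θ ψ)
        = ∫⁻ ψ, s.indicator (fun _ => (1 : ℝ≥0∞)) θ *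
            (ENNReal.ofReal (h (θ - I.mulVec ψ)) *
              ENNReal.ofReal (h θ / (Z * Zs θ))) := by
          exact lintegral_congr hGval
      _ = s.indicator (fun _ => (1 : ℝ≥0∞)) θ *
            ((∫⁻ ψ, ENNReal.ofReal (h (θ - I.mulVec ψ))) *
              ENNReal.ofReal (h θ / (Z * Zs θ))) := by
          have hm1 : Measurable fun ψ : Fin nc → ℝ =>
              ENNReal.ofReal (h (θ - I.mulVec ψ)) :=
            Measurable.ennreal_ofReal (by exact hmeas.comp (measurable_const.sub hIm))
          rw [lintegral_const_mul _ (hm1.mul_const _), lintegral_mul_const _ hm1]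
      _ = s.indicator (fun _ => (1 : ℝ≥0∞)) θ *
            (ENNReal.ofReal (Zs θ) * ENNReal.ofReal (h θ / (Z * Zs θ))) := by
          rw [← ofReal_integral_eq_lintegral_ofReal (hnegint θ)
            (Filter.Eventually.of_forall fun ψ => hpos _), hZsneg]
      _ = s.indicator (fun _ => (1 : ℝ≥0∞)) θ * ENNReal.ofReal (h θ / Z) := by
          rw [← ENNReal.ofReal_mul (hZspos θ).le]
          congr 2
          have h1 : Zs θ ≠ 0 := (hZspos θ).ne'
          have h2 : Z ≠ 0 := hZpos.ne'
          field_simp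
  rw [step1, step2]
  calc (∫⁻ θ, ∫⁻ ψ, G θ ψ)
      = ∫⁻ θ, s.indicator (fun _ => (1 : ℝ≥0∞)) θ * ENNReal.ofReal (h θ / Z) :=
        lintegral_congr step3
    _ = ∫⁻ θ, s.indicator (fun x => ENNReal.ofReal (h x / Z)) θ := by
        apply lintegral_congr
        intro θ
        by_cases hθ : θ ∈ s <;> simp [Set.indicator_apply, hθ]
    _ = ∫⁻ θ in s, ENNReal.ofReal (h θ / Z) := lintegral_indicator hs _
end

section
/- Under the iteration θ⁽ᵐ⁺¹⁾ = Xθ⁽ᵐ⁾ + Yf + W⁽ᵐ⁾ with the assumptions that A⁻¹ - Cov(W) = XA⁻¹Xᵀ, Yf = (I - X)A⁻¹f, and that X is a contraction with respect to some matrix norm (‖X‖ < 1), the mean E[θ⁽ᵐ⁾] converges to A⁻¹f and the covariance Cov(θ⁽ᵐ⁾) converges to A⁻¹ as m → ∞, for any square-integrable initial condition θ⁽⁰⁾. -/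
/-!
Taking expectations in the recursion, the mean error satisfies
`E θ⁽ᵐ⁺¹⁾ - A⁻¹f = X (E θ⁽ᵐ⁾ - A⁻¹f)`; independence of `θ⁽ᵐ⁾` and `W⁽ᵐ⁾` kills the cross
covariances, so `Cov θ⁽ᵐ⁺¹⁾ - A⁻¹ = X (Cov θ⁽ᵐ⁾ - A⁻¹) Xᵀ`. Both errors are therefore the initial
ones transformed by `Xᵐ`, and `Xᵐ → 0` because `‖Xᵐ‖ ≤ ‖1‖ ‖X‖ᵐ` and all norms on a
finite-dimensional space are equivalent.
-/

open Matrix MeasureTheory ProbabilityTheory Filter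

/-- The (componentwise) mean of a random vector. -/
noncomputable def meanVec {Ω : Type*} [MeasurableSpace Ω] (P : Measure Ω) {n : ℕ}
    (X : Ω → Fin n → ℝ) : Fin n → ℝ :=
  fun i => ∫ ω, X ω i ∂P

/-- The (cross-)covariance matrix `Cov(X, Y) = E[(X - E X)(Y - E Y)ᵀ]` of two random
vectors. -/
noncomputable def covMat {Ω : Type*} [MeasurableSpace Ω] (P : Measure Ω) {n : ℕ}
    (X Y : Ω → Fin n → ℝ) : Matrix (Fin n) (Fin n) ℝ :=
  Matrix.of fun i j =>
    ∫ ω, (X ω i - meanVec P X i) * (Y ω j - meanVec P Y j) ∂P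

open Topology

theorem tendsto_nhds_zero_of_tendsto_normFun {E : Type*} [AddCommGroup E] [Module ℝ E]
    [FiniteDimensional ℝ E] [tE : TopologicalSpace E] [IsTopologicalAddGroup E]
    [ContinuousSMul ℝ E] [T2Space E] {g : E → ℝ}
    (hadd : ∀ x y, g (x + y) ≤ g x + g y) (hsmul : ∀ (a : ℝ) x, g (a • x) = |a| * g x)
    (hdef : ∀ x, g x = 0 → x = 0) {α : Type*} {l : Filter α} {u : α → E}
    (hu : Tendsto (fun a => g (u a)) l (𝓝 0)) : Tendsto u l (𝓝 0) := by
  -- `F` is a copy of `E` normed by `g`; as `F` and `E` are the same type with two different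
  -- topologies, the instances are passed explicitly.
  let F : Type _ := E
  let p : AddGroupNorm F :=
    { toFun := g
      map_zero' := by simpa using hsmul 0 0
      add_le' := hadd
      neg' := fun x => by simpa using hsmul (-1) x
      eq_zero_of_map_eq_zero' := hdef }
  let : NormedAddCommGroup F := p.toNormedAddCommGroup
  let : NormedSpace ℝ F := { norm_smul_le := fun a x => (hsmul a x).le }
  let tF : TopologicalSpace F := UniformSpace.toTopologicalSpace
  have hid : @Continuous F E tF tE id :=
    @LinearMap.continuous_of_finiteDimensional ℝ _ F _ _ tF _ _ E _ _ tE _ _ _ _ _ LinearMap.id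
  have hF : @Tendsto α F u l (@nhds F tF 0) := tendsto_zero_iff_norm_tendsto_zero.mpr hu
  exact (@Continuous.tendsto F E tF tE id hid 0).comp hF

theorem tendsto_pow_atTop_nhds_zero_of_normFun_lt_one {E : Type*} [Ring E] [Module ℝ E]
    [FiniteDimensional ℝ E] [TopologicalSpace E] [IsTopologicalAddGroup E]
    [ContinuousSMul ℝ E] [T2Space E] {g : E → ℝ} (hnonneg : ∀ x, 0 ≤ g x)
    (hadd : ∀ x y, g (x + y) ≤ g x + g y) (hsmul : ∀ (a : ℝ) x, g (a • x) = |a| * g x)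
    (hdef : ∀ x, g x = 0 → x = 0) (hmul : ∀ x y, g (x * y) ≤ g x * g y) {x : E}
    (hx : g x < 1) : Tendsto (x ^ ·) atTop (𝓝 0) := by
  have hbound (m : ℕ) : g (x ^ m) ≤ g 1 * g x ^ m := by
    induction m with
    | zero => simp
    | succ m ih =>
      calc g (x ^ (m + 1)) ≤ g (x ^ m) * g x := pow_succ x m ▸ hmul _ _
        _ ≤ g 1 * g x ^ (m + 1) := by
          rw [pow_succ, ← mul_assoc]; exact mul_le_mul_of_nonneg_right ih (hnonneg x)
  have hgeom : Tendsto (fun m : ℕ => g 1 * g x ^ m) atTop (𝓝 0) := by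
    simpa using (tendsto_pow_atTop_nhds_zero_of_lt_one (hnonneg x) hx).const_mul (g 1)
  exact tendsto_nhds_zero_of_tendsto_normFun hadd hsmul hdef
    (squeeze_zero (fun m => hnonneg _) hbound hgeom)

namespace Matrix

variable {ι R : Type*} [Fintype ι] [DecidableEq ι] [CommRing R] [TopologicalSpace R]
  [IsTopologicalRing R] {X : Matrix ι ι R}

theorem tendsto_of_affine_recursion (hX : Tendsto (X ^ ·) atTop (𝓝 0)) {b : ι → R}
    {v : ℕ → ι → R} (hv : ∀ m, v (m + 1) = X *ᵥ v m + (1 - X) *ᵥ b) :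
    Tendsto v atTop (𝓝 b) := by
  have hclosed (m : ℕ) : v m = (X ^ m) *ᵥ (v 0 - b) + b := by
    induction m with
    | zero => simp
    | succ m ih =>
      rw [hv, ih, pow_succ', ← mulVec_mulVec, sub_mulVec, one_mulVec, mulVec_add]
      abel
  have hcont : Continuous fun M : Matrix ι ι R => M *ᵥ (v 0 - b) + b :=
    (continuous_id.matrix_mulVec continuous_const).add continuous_const
  have hlim := (hcont.tendsto 0).comp hX
  rw [zero_mulVec, zero_add] at hlim
  exact hlim.congr fun m => (hclosed m).symm

theorem tendsto_of_congruence_recursion (hX : Tendsto (X ^ ·) atTop (𝓝 0))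
    {S : Matrix ι ι R} {C : ℕ → Matrix ι ι R}
    (hC : ∀ m, C (m + 1) = X * C m * Xᵀ + (S - X * S * Xᵀ)) :
    Tendsto C atTop (𝓝 S) := by
  have hclosed (m : ℕ) : C m = X ^ m * (C 0 - S) * (X ^ m)ᵀ + S := by
    induction m with
    | zero => simp
    | succ m ih =>
      rw [hC, ih, pow_succ', transpose_mul]
      noncomm_ring
  have hcont : Continuous fun M : Matrix ι ι R => M * (C 0 - S) * Mᵀ + S :=
    ((continuous_id.matrix_mul continuous_const).matrix_mul
      continuous_id.matrix_transpose).add continuous_const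
  have hlim := (hcont.tendsto 0).comp hX
  rw [zero_mul, zero_mul, zero_add] at hlim
  exact hlim.congr fun m => (hclosed m).symm

end Matrix

theorem MeasureTheory.MemLp.matrix_mulVec {Ω ι κ : Type*} [MeasurableSpace Ω] {P : Measure Ω}
    [Fintype ι] [Fintype κ] {p : ENNReal} {Z : Ω → ι → ℝ} (hZ : MemLp Z p P)
    (M : Matrix κ ι ℝ) : MemLp (fun ω => M *ᵥ Z ω) p P :=
  (LinearMap.toContinuousLinearMap (mulVecLin M)).comp_memLp' hZ

section RandomVectors

variable {Ω : Type*} [MeasurableSpace Ω] {P : Measure Ω} {n : ℕ} {Z V : Ω → Fin n → ℝ}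

theorem meanVec_eq_integral (hZ : Integrable Z P) : meanVec P Z = ∫ ω, Z ω ∂P :=
  funext fun i => (eval_integral hZ.eval i).symm

theorem meanVec_mulVec_add_add [IsProbabilityMeasure P] (M : Matrix (Fin n) (Fin n) ℝ)
    (c : Fin n → ℝ) (hZ : Integrable Z P) (hV : Integrable V P) :
    meanVec P (fun ω => M *ᵥ Z ω + c + V ω) = M *ᵥ meanVec P Z + c + meanVec P V := by
  let L := LinearMap.toContinuousLinearMap (mulVecLin M)
  have hMZ : Integrable (fun ω => M *ᵥ Z ω) P := L.integrable_comp hZ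
  have hMZc : Integrable (fun ω => M *ᵥ Z ω + c) P := hMZ.add (integrable_const c)
  have hcomm : ∫ ω, M *ᵥ Z ω ∂P = M *ᵥ ∫ ω, Z ω ∂P := L.integral_comp_comm hZ
  rw [meanVec_eq_integral (Z := fun ω => M *ᵥ Z ω + c + V ω) (hMZc.add hV),
    meanVec_eq_integral hZ, meanVec_eq_integral hV,
    integral_add hMZc hV, integral_add hMZ (integrable_const c), hcomm]
  simp

theorem covMat_apply (i j : Fin n) :
    covMat P Z V i j = cov[fun ω => Z ω i, fun ω => V ω j; P] := rfl

theorem covMat_add_const_left [IsProbabilityMeasure P] (hZ : Integrable Z P) (c : Fin n → ℝ) :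
    covMat P (fun ω => Z ω + c) V = covMat P Z V := by
  ext i j
  exact covariance_add_const_left (hZ.eval i) (c i)

theorem covMat_add_const_right [IsProbabilityMeasure P] (hV : Integrable V P) (c : Fin n → ℝ) :
    covMat P Z (fun ω => V ω + c) = covMat P Z V := by
  ext i j
  exact covariance_add_const_right (hV.eval j) (c j)

theorem covMat_add_left [IsFiniteMeasure P] {Z' : Ω → Fin n → ℝ} (hZ : MemLp Z 2 P)
    (hZ' : MemLp Z' 2 P) (hV : MemLp V 2 P) :
    covMat P (fun ω => Z ω + Z' ω) V = covMat P Z V + covMat P Z' V := by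
  ext i j
  exact covariance_add_left (hZ.eval i) (hZ'.eval i) (hV.eval j)

theorem covMat_add_right [IsFiniteMeasure P] {V' : Ω → Fin n → ℝ} (hZ : MemLp Z 2 P)
    (hV : MemLp V 2 P) (hV' : MemLp V' 2 P) :
    covMat P Z (fun ω => V ω + V' ω) = covMat P Z V + covMat P Z V' := by
  ext i j
  exact covariance_add_right (hZ.eval i) (hV.eval j) (hV'.eval j)

theorem covMat_mulVec_left [IsFiniteMeasure P] (M : Matrix (Fin n) (Fin n) ℝ)
    (hZ : MemLp Z 2 P) (hV : MemLp V 2 P) :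
    covMat P (fun ω => M *ᵥ Z ω) V = M * covMat P Z V := by
  ext i j
  simp only [covMat_apply, mul_apply, mulVec, dotProduct]
  rw [covariance_fun_sum_left (fun k => (hZ.eval k).const_mul (M i k)) (hV.eval j)]
  simp only [covariance_const_mul_left]

theorem covMat_mulVec_right [IsFiniteMeasure P] (M : Matrix (Fin n) (Fin n) ℝ)
    (hZ : MemLp Z 2 P) (hV : MemLp V 2 P) :
    covMat P Z (fun ω => M *ᵥ V ω) = covMat P Z V * Mᵀ := by
  ext i j
  simp only [covMat_apply, mul_apply, mulVec, dotProduct, transpose_apply]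
  rw [covariance_fun_sum_right (fun k => (hV.eval k).const_mul (M j k)) (hZ.eval i)]
  simp only [covariance_mul_const_right, mul_comm]

theorem ProbabilityTheory.IndepFun.covMat_eq_zero (h : IndepFun Z V P) (hZ : MemLp Z 2 P)
    (hV : MemLp V 2 P) : covMat P Z V = 0 := by
  ext i j
  exact (h.comp (measurable_pi_apply i) (measurable_pi_apply j)).covariance_eq_zero
    (hZ.eval i) (hV.eval j)

theorem covMat_mulVec_add_add_of_indepFun [IsProbabilityMeasure P]
    (M : Matrix (Fin n) (Fin n) ℝ) (c : Fin n → ℝ) (hZ : MemLp Z 2 P) (hV : MemLp V 2 P)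
    (hZV : IndepFun Z V P) :
    covMat P (fun ω => M *ᵥ Z ω + c + V ω) (fun ω => M *ᵥ Z ω + c + V ω)
      = M * covMat P Z Z * Mᵀ + covMat P V V := by
  have hMZ := hZ.matrix_mulVec M
  have hU : MemLp (fun ω => M *ᵥ Z ω + V ω) 2 P := hMZ.add hV
  have hshift : (fun ω => M *ᵥ Z ω + c + V ω) = fun ω => (M *ᵥ Z ω + V ω) + c :=
    funext fun ω => add_right_comm _ _ _
  rw [hshift, covMat_add_const_left (hU.integrable one_le_two),
    covMat_add_const_right (hU.integrable one_le_two), covMat_add_left hMZ hV hU,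
    covMat_add_right hMZ hMZ hV, covMat_add_right hV hMZ hV, covMat_mulVec_left M hZ hMZ,
    covMat_mulVec_right M hZ hZ, covMat_mulVec_left M hZ hV, covMat_mulVec_right M hV hZ,
    hZV.covMat_eq_zero hZ hV, hZV.symm.covMat_eq_zero hV hZ]
  simp [Matrix.mul_assoc]

end RandomVectors

theorem mgmc_moment_convergence_general {n : ℕ} {Ω : Type*} [MeasurableSpace Ω]
    (P : Measure Ω) [IsProbabilityMeasure P]
    (A X Y : Matrix (Fin n) (Fin n) ℝ)
    (f : Fin n → ℝ) (hYf : Y.mulVec f = (1 - X).mulVec (A⁻¹.mulVec f))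
    (θ W : ℕ → Ω → Fin n → ℝ)
    (hθL2 : ∀ m, MemLp (θ m) 2 P) (hWL2 : ∀ m, MemLp (W m) 2 P)
    (hrec : ∀ m ω, θ (m + 1) ω = X.mulVec (θ m ω) + Y.mulVec f + W m ω)
    (hW0 : ∀ m, meanVec P (W m) = 0)
    (hWK : ∀ m, covMat P (W m) (W m) = A⁻¹ - X * A⁻¹ * Xᵀ)
    (hind : ∀ m k, IndepFun (θ m) (W (m + k)) P)
    (hnorm : ∃ nn : Matrix (Fin n) (Fin n) ℝ → ℝ,
        (∀ M, 0 ≤ nn M) ∧ (∀ M, nn M = 0 → M = 0) ∧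
        (∀ (a : ℝ) M, nn (a • M) = |a| * nn M) ∧
        (∀ M N, nn (M + N) ≤ nn M + nn N) ∧
        (∀ M N, nn (M * N) ≤ nn M * nn N) ∧ nn X < 1) :
    Tendsto (fun m => meanVec P (θ m)) atTop (nhds (A⁻¹.mulVec f)) ∧
      Tendsto (fun m => covMat P (θ m) (θ m)) atTop (nhds A⁻¹) := by
  obtain ⟨nn, hnonneg, hdef, hsmul, hadd, hmul, hX⟩ := hnorm
  have hXpow : Tendsto (X ^ ·) atTop (𝓝 0) :=
    tendsto_pow_atTop_nhds_zero_of_normFun_lt_one hnonneg hadd hsmul hdef hmul hX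
  have hstep (m : ℕ) : θ (m + 1) = fun ω => X *ᵥ θ m ω + Y *ᵥ f + W m ω := funext (hrec m)
  have hindep (m : ℕ) : IndepFun (θ m) (W m) P := hind m 0
  constructor
  · refine tendsto_of_affine_recursion hXpow fun m => ?_
    rw [hstep, meanVec_mulVec_add_add X _ ((hθL2 m).integrable one_le_two)
      ((hWL2 m).integrable one_le_two), hW0, add_zero, hYf]
  · refine tendsto_of_congruence_recursion hXpow fun m => ?_
    rw [hstep, covMat_mulVec_add_add_of_indepFun X _ (hθL2 m) (hWL2 m) (hindep m), hWK]

/-- For the iteration `θ⁽ᵐ⁺¹⁾ = X θ⁽ᵐ⁾ + Y f + W⁽ᵐ⁾` with i.i.d. mean-zero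
noise of covariance `A⁻¹ - X A⁻¹ Xᵀ` independent of the current (and earlier) states,
`Y f = (I - X) A⁻¹ f`, and `X` a contraction with respect to some consistent
(submultiplicative) matrix norm, the means `E[θ⁽ᵐ⁾]` converge to `A⁻¹ f` and the covariances
`Cov(θ⁽ᵐ⁾)` converge to `A⁻¹`, for any square-integrable initial condition. -/
theorem mgmc_moment_convergence {n : ℕ} {Ω : Type*} [MeasurableSpace Ω]
    (P : Measure Ω) [IsProbabilityMeasure P]
    (A X Y : Matrix (Fin n) (Fin n) ℝ) (hA : A.PosDef) (hAs : A.IsSymm)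
    (f : Fin n → ℝ) (hYf : Y.mulVec f = (1 - X).mulVec (A⁻¹.mulVec f))
    (θ W : ℕ → Ω → Fin n → ℝ)
    (hθm : ∀ m, Measurable (θ m)) (hWm : ∀ m, Measurable (W m))
    (hθL2 : ∀ m, MemLp (θ m) 2 P) (hWL2 : ∀ m, MemLp (W m) 2 P)
    (hrec : ∀ m ω, θ (m + 1) ω = X.mulVec (θ m ω) + Y.mulVec f + W m ω)
    (hW0 : ∀ m, meanVec P (W m) = 0)
    (hWK : ∀ m, covMat P (W m) (W m) = A⁻¹ - X * A⁻¹ * Xᵀ)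
    (hind : ∀ m k, IndepFun (θ m) (W (m + k)) P)
    (hnorm : ∃ nn : Matrix (Fin n) (Fin n) ℝ → ℝ,
        (∀ M, 0 ≤ nn M) ∧ (∀ M, nn M = 0 → M = 0) ∧
        (∀ (a : ℝ) M, nn (a • M) = |a| * nn M) ∧
        (∀ M N, nn (M + N) ≤ nn M + nn N) ∧
        (∀ M N, nn (M * N) ≤ nn M * nn N) ∧ nn X < 1) :
    Tendsto (fun m => meanVec P (θ m)) atTop (nhds (A⁻¹.mulVec f)) ∧
      Tendsto (fun m => covMat P (θ m) (θ m)) atTop (nhds A⁻¹) :=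
  mgmc_moment_convergence_general P A X Y f hYf θ W hθL2 hWL2 hrec hW0 hWK hind hnorm
end

section
/- Let A be symmetric positive definite and X a matrix with ‖X‖_A := ‖A^{1/2}XA^{-1/2}‖₂ ≤ q < 1 for constants independent of the dimension. For the Gaussian Markov chain θ⁽ᵐ⁺¹⁾ = Xθ⁽ᵐ⁾ + Yf + W⁽ᵐ⁾ as above, started in the stationary distribution N(A⁻¹f, A⁻¹), the integrated autocorrelation time of F·θ⁽ᵐ⁾ for a fixed vector F satisfies τ_int,F = 1 + 2Σ_{s=1}^∞ (FᵀXˢA⁻¹F)/(FᵀA⁻¹F) ≤ (1 + ‖X‖_A)/(1 - ‖X‖_A). -/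
/-!
With `B = A^{1/2}`, `Y = B X B⁻¹` and `g = B⁻¹ F`, each lag-`s` autocorrelation
`Fᵀ Xˢ A⁻¹ F / Fᵀ A⁻¹ F` equals the quotient `gᵀ Yˢ g / gᵀ g`, which is at most
`‖Y‖ˢ = ‖X‖_Aˢ` in absolute value. Summing the geometric series gives
`τ_int,F ≤ 1 + 2 q / (1 - q) = (1 + q) / (1 - q)` with `q = ‖X‖_A`.
-/

open Matrix

/-- The spectral (ℓ²-operator) norm of a real square matrix. -/
noncomputable def specNorm {n : ℕ} (M : Matrix (Fin n) (Fin n) ℝ) : ℝ :=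
  ‖(Matrix.toEuclideanCLM (𝕜 := ℝ) M : EuclideanSpace ℝ (Fin n) →L[ℝ] EuclideanSpace ℝ (Fin n))‖

/-- The square root of a positive semidefinite matrix, as `Matrix.PosSemidef.sqrt` was defined
in the older Mathlib (that definition has since been removed). -/
noncomputable def posSemidefSqrt {n : Type*} [Fintype n] [DecidableEq n]
    {A : Matrix n n ℝ} (hA : A.PosSemidef) : Matrix n n ℝ :=
  hA.1.eigenvectorUnitary.1 * diagonal ((↑) ∘ (√·) ∘ hA.1.eigenvalues) *
    (star hA.1.eigenvectorUnitary : Matrix n n ℝ)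

section posSemidefSqrt

variable {n : Type*} [Fintype n] [DecidableEq n] {A : Matrix n n ℝ}

lemma posSemidefSqrt_mul_self (hA : A.PosSemidef) : posSemidefSqrt hA * posSemidefSqrt hA = A := by
  set U : Matrix n n ℝ := hA.1.eigenvectorUnitary.1
  set D : Matrix n n ℝ := diagonal ((↑) ∘ (√·) ∘ hA.1.eigenvalues)
  have hU : star U * U = 1 := Unitary.coe_star_mul_self _
  have hD : D * D = diagonal ((↑) ∘ hA.1.eigenvalues) := by
    rw [diagonal_mul_diagonal]
    congr 1
    funext i
    simp [Real.mul_self_sqrt (hA.eigenvalues_nonneg i)]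
  calc posSemidefSqrt hA * posSemidefSqrt hA = U * (D * (star U * U) * D) * star U := by
        simp only [posSemidefSqrt, U, D, Matrix.mul_assoc]
    _ = A := by
      rw [hU, Matrix.mul_one, hD]
      have hs := hA.1.spectral_theorem
      rw [Unitary.conjStarAlgAut_apply] at hs
      exact hs.symm

lemma posSemidefSqrt_transpose (hA : A.PosSemidef) : (posSemidefSqrt hA)ᵀ = posSemidefSqrt hA := by
  simp [posSemidefSqrt, Matrix.mul_assoc, Matrix.star_eq_conjTranspose,
    conjTranspose_eq_transpose_of_trivial]

lemma isUnit_det_posSemidefSqrt (hA : A.PosSemidef) (hdet : IsUnit A.det) :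
    IsUnit (posSemidefSqrt hA).det :=
  isUnit_of_mul_isUnit_left (x := (posSemidefSqrt hA).det)
    (by rwa [← det_mul, posSemidefSqrt_mul_self hA])

end posSemidefSqrt

lemma dotProduct_pow_mul_inv_mulVec_eq {R : Type*} [CommRing R] {n : Type*} [Fintype n]
    [DecidableEq n] {A B : Matrix n n R} (X : Matrix n n R) (hB : IsUnit B.det) (hBt : Bᵀ = B)
    (hBA : B * B = A) (F : n → R) (k : ℕ) :
    F ⬝ᵥ (X ^ k * A⁻¹) *ᵥ F = (B⁻¹ *ᵥ F) ⬝ᵥ (B * X * B⁻¹) ^ k *ᵥ (B⁻¹ *ᵥ F) := by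
  have hmat : B⁻¹ * (B * X * B⁻¹) ^ k * B⁻¹ = X ^ k * A⁻¹ := by
    obtain ⟨u, rfl⟩ := (isUnit_iff_isUnit_det B).2 hB
    rw [← hBA, Matrix.mul_inv_rev, ← coe_units_inv, Units.conj_pow]
    simp only [← Matrix.mul_assoc, Units.inv_mul, Matrix.one_mul]
  have hsymm : F ᵥ* B⁻¹ = B⁻¹ *ᵥ F := by
    rw [← mulVec_transpose, transpose_nonsing_inv, hBt]
  rw [mulVec_mulVec, ← hsymm, ← dotProduct_mulVec, mulVec_mulVec, ← Matrix.mul_assoc, hmat]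

section specNorm

variable {n : ℕ}

lemma specNorm_nonneg (M : Matrix (Fin n) (Fin n) ℝ) : 0 ≤ specNorm M :=
  norm_nonneg _

lemma specNorm_pow_le (M : Matrix (Fin n) (Fin n) ℝ) {k : ℕ} (hk : 0 < k) :
    specNorm (M ^ k) ≤ specNorm M ^ k := by
  simpa only [specNorm, map_pow] using norm_pow_le' _ hk

lemma abs_dotProduct_mulVec_le (M : Matrix (Fin n) (Fin n) ℝ) (g : Fin n → ℝ) :
    |g ⬝ᵥ M *ᵥ g| ≤ specNorm M * (g ⬝ᵥ g) := by
  set v : EuclideanSpace ℝ (Fin n) := WithLp.toLp 2 g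
  have hv : g ⬝ᵥ g = ‖v‖ ^ 2 := by
    rw [← real_inner_self_eq_norm_sq, EuclideanSpace.inner_eq_star_dotProduct, star_trivial]
  calc |g ⬝ᵥ M *ᵥ g| = |inner ℝ v (toEuclideanCLM (𝕜 := ℝ) M v)| := by
        rw [inner_toEuclideanCLM]
    _ ≤ ‖v‖ * ‖toEuclideanCLM (𝕜 := ℝ) M v‖ := abs_real_inner_le_norm _ _
    _ ≤ ‖v‖ * (specNorm M * ‖v‖) := by gcongr; exact ContinuousLinearMap.le_opNorm _ _
    _ = specNorm M * (g ⬝ᵥ g) := by rw [hv]; ring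

end specNorm

lemma abs_div_le_specNorm_conj_pow {n : ℕ} {A B : Matrix (Fin n) (Fin n) ℝ}
    (X : Matrix (Fin n) (Fin n) ℝ) (hB : IsUnit B.det) (hBt : Bᵀ = B) (hBA : B * B = A)
    (F : Fin n → ℝ) {k : ℕ} (hk : 0 < k) :
    |F ⬝ᵥ (X ^ k * A⁻¹) *ᵥ F / F ⬝ᵥ A⁻¹ *ᵥ F| ≤ specNorm (B * X * B⁻¹) ^ k := by
  have hden := dotProduct_pow_mul_inv_mulVec_eq X hB hBt hBA F 0
  rw [pow_zero, pow_zero, Matrix.one_mul, one_mulVec] at hden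
  set g := B⁻¹ *ᵥ F
  have hg : 0 ≤ g ⬝ᵥ g := by simpa using dotProduct_star_self_nonneg g
  rw [dotProduct_pow_mul_inv_mulVec_eq X hB hBt hBA F k, hden, abs_div, abs_of_nonneg hg]
  -- no positivity needed: at `g = 0` the quotient is the junk value `x / 0 = 0`
  refine div_le_of_le_mul₀ hg (pow_nonneg (specNorm_nonneg _) k) ?_
  calc |g ⬝ᵥ (B * X * B⁻¹) ^ k *ᵥ g| ≤ specNorm ((B * X * B⁻¹) ^ k) * (g ⬝ᵥ g) :=
        abs_dotProduct_mulVec_le _ _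
    _ ≤ specNorm (B * X * B⁻¹) ^ k * (g ⬝ᵥ g) := by gcongr; exact specNorm_pow_le _ hk

lemma summable_and_one_add_two_mul_tsum_le {a : ℕ → ℝ} {q : ℝ} (hq0 : 0 ≤ q) (hq1 : q < 1)
    (ha : ∀ s, |a s| ≤ q ^ (s + 1)) :
    Summable a ∧ 1 + 2 * ∑' s, a s ≤ (1 + q) / (1 - q) := by
  have hgeom : HasSum (fun s => q ^ (s + 1)) (q / (1 - q)) := by
    simpa only [pow_succ', div_eq_mul_inv] using (hasSum_geometric_of_lt_one hq0 hq1).mul_left q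
  have hsum : Summable a := hgeom.summable.of_norm_bounded ha
  have htsum : ∑' s, a s ≤ q / (1 - q) :=
    hasSum_le (fun s => (le_abs_self _).trans (ha s)) hsum.hasSum hgeom
  refine ⟨hsum, ?_⟩
  have h1q : 0 < 1 - q := by linarith
  calc 1 + 2 * ∑' s, a s ≤ 1 + 2 * (q / (1 - q)) := by gcongr
    _ = (1 + q) / (1 - q) := by field_simp; ring

theorem iact_bound_general {n : ℕ}
    (A X : Matrix (Fin n) (Fin n) ℝ) (hA : A.PosDef)
    (F : Fin n → ℝ) (nX : ℝ)
    (hnX : nX = specNorm (posSemidefSqrt hA.posSemidef * X * (posSemidefSqrt hA.posSemidef)⁻¹))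
    (hnX1 : nX < 1) :
    Summable (fun s : ℕ =>
        (F ⬝ᵥ ((X ^ (s + 1) * A⁻¹).mulVec F)) / (F ⬝ᵥ (A⁻¹.mulVec F))) ∧
      1 + 2 * ∑' s : ℕ,
          (F ⬝ᵥ ((X ^ (s + 1) * A⁻¹).mulVec F)) / (F ⬝ᵥ (A⁻¹.mulVec F))
        ≤ (1 + nX) / (1 - nX) := by
  have hB : IsUnit (posSemidefSqrt hA.posSemidef).det :=
    isUnit_det_posSemidefSqrt hA.posSemidef hA.det_pos.ne'.isUnit
  subst hnX
  exact summable_and_one_add_two_mul_tsum_le (specNorm_nonneg _) hnX1 fun s =>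
    abs_div_le_specNorm_conj_pow X hB (posSemidefSqrt_transpose _) (posSemidefSqrt_mul_self _) F
      s.succ_pos

/-- For a stationary Gaussian chain with
`Cov(Fᵀθ⁽ᵐ⁺ˢ⁾, Fᵀθ⁽ᵐ⁾) = Fᵀ Xˢ A⁻¹ F`, the integrated autocorrelation time
`τ_int,F = 1 + 2 ∑_{s≥1} (Fᵀ Xˢ A⁻¹ F)/(Fᵀ A⁻¹ F)` is well defined (the series is summable)
and satisfies `τ_int,F ≤ (1 + ‖X‖_A)/(1 - ‖X‖_A)` where
`‖X‖_A := ‖A^{1/2} X A^{-1/2}‖₂ < 1`. -/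
theorem iact_bound {n : ℕ}
    (A X : Matrix (Fin n) (Fin n) ℝ) (hA : A.PosDef)
    (F : Fin n → ℝ) (hF : F ≠ 0) (nX : ℝ)
    (hnX : nX = specNorm (posSemidefSqrt hA.posSemidef * X * (posSemidefSqrt hA.posSemidef)⁻¹))
    (hnX1 : nX < 1) :
    Summable (fun s : ℕ =>
        (F ⬝ᵥ ((X ^ (s + 1) * A⁻¹).mulVec F)) / (F ⬝ᵥ (A⁻¹.mulVec F))) ∧
      1 + 2 * ∑' s : ℕ,
          (F ⬝ᵥ ((X ^ (s + 1) * A⁻¹).mulVec F)) / (F ⬝ᵥ (A⁻¹.mulVec F))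
        ≤ (1 + nX) / (1 - nX) :=
  iact_bound_general A X hA F nX hnX hnX1
end

section
/- Let A be symmetric positive definite and decompose A = D + L + Lᵀ with D diagonal positive definite and L strictly lower triangular. Let B be an n×β matrix and Γ a symmetric positive definite β×β matrix, and set Ã = A + BΓ⁻¹Bᵀ, M̃ = D + BΓ⁻¹Bᵀ + L (the forward Gibbs splitting with low-rank correction, ω = 1). Then the symmetrised splitting matrix satisfies M̃^{SGS} := M̃(M̃ + M̃ᵀ - Ã)⁻¹M̃ᵀ = Ã + L(D + BΓ⁻¹Bᵀ)⁻¹Lᵀ. -/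
open Matrix

/-- For `A = D + L + Lᵀ` symmetric positive definite (`D` diagonal positive
definite, `L` strictly lower triangular), `Γ` symmetric positive definite, with
`Ã = A + B Γ⁻¹ Bᵀ` and `M̃ = D + B Γ⁻¹ Bᵀ + L`, the symmetrised splitting matrix satisfies
`M̃ (M̃ + M̃ᵀ - Ã)⁻¹ M̃ᵀ = Ã + L (D + B Γ⁻¹ Bᵀ)⁻¹ Lᵀ`. -/
theorem low_rank_sgs_splitting {n β : ℕ}
    (A D L : Matrix (Fin n) (Fin n) ℝ) (B : Matrix (Fin n) (Fin β) ℝ)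
    (Γ : Matrix (Fin β) (Fin β) ℝ)
    (hA : A.PosDef) (hsplit : A = D + L + Lᵀ)
    (hD : D.IsDiag) (hDpd : D.PosDef)
    (hL : ∀ i j : Fin n, i ≤ j → L i j = 0)
    (hΓ : Γ.PosDef) (hΓs : Γ.IsSymm) :
    (D + B * Γ⁻¹ * Bᵀ + L) *
        ((D + B * Γ⁻¹ * Bᵀ + L) + (D + B * Γ⁻¹ * Bᵀ + L)ᵀ - (A + B * Γ⁻¹ * Bᵀ))⁻¹ *
        (D + B * Γ⁻¹ * Bᵀ + L)ᵀ
      = (A + B * Γ⁻¹ * Bᵀ) + L * (D + B * Γ⁻¹ * Bᵀ)⁻¹ * Lᵀ := by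
  set S := D + B * Γ⁻¹ * Bᵀ with hS
  have hSpd : S.PosDef := by
    have h1 : (B * Γ⁻¹ * Bᵀ).PosSemidef := by
      have : (B * Γ⁻¹ * Bᴴ).PosSemidef := hΓ.inv.posSemidef.mul_mul_conjTranspose_same B
      simpa using this
    exact hDpd.add_posSemidef h1
  have hSsymm : Sᵀ = S := by
    have := hSpd.isHermitian
    simpa using this.eq
  have hSinv : S * S⁻¹ = 1 := mul_nonsing_inv _ (isUnit_iff_ne_zero.mpr hSpd.det_pos.ne')
  have hkey : (S + L) + (S + L)ᵀ - (A + B * Γ⁻¹ * Bᵀ) = S := by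
    rw [transpose_add, hSsymm, hsplit, hS]
    abel
  rw [hkey, transpose_add, hSsymm, hsplit]
  have expand : (S + L) * S⁻¹ * (S + Lᵀ)
      = S * S⁻¹ * S + S * S⁻¹ * Lᵀ + L * S⁻¹ * S + L * S⁻¹ * Lᵀ := by noncomm_ring
  rw [expand, hSinv]
  have hSinvS : S⁻¹ * S = 1 := nonsing_inv_mul _ (isUnit_iff_ne_zero.mpr hSpd.det_pos.ne')
  rw [mul_assoc L S⁻¹ S, hSinvS]
  rw [hS]
  simp only [one_mul, mul_one]
  abel
end

section
/- Let A = D + L + Lᵀ be symmetric positive definite, B ∈ ℝ^{n×β}, Γ symmetric positive definite, M^{SGS} := A + LD⁻¹Lᵀ, and M̃^{SGS} := A + BΓ⁻¹Bᵀ + L(D + BΓ⁻¹Bᵀ)⁻¹Lᵀ. Then for every x ∈ ℝⁿ, xᵀM̃^{SGS}x ≤ xᵀBΓ⁻¹Bᵀx + xᵀM^{SGS}x. Consequently ‖M̃^{SGS}‖₂ ≤ ‖BΓ⁻¹Bᵀ‖₂ + ‖M^{SGS}‖₂. -/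
open Matrix

/-! With `S = B Γ⁻¹ Bᵀ ⪰ 0`, the quadratic form of `M̃^{SGS}` exceeds that of `S + M^{SGS}` only
through `L (D + S)⁻¹ Lᵀ` versus `L D⁻¹ Lᵀ`, and evaluating both at `x` means evaluating
`(D + S)⁻¹ ⪯ D⁻¹` at `Lᵀ x`. For the norm bound, the spectral norm of a positive semidefinite
operator is the supremum of its Rayleigh quotient, hence it is monotone under domination of
quadratic forms; the triangle inequality then splits `‖S + M^{SGS}‖₂`. -/

namespace ContinuousLinearMap

variable {𝕜 E : Type*} [RCLike 𝕜] [NormedAddCommGroup E] [InnerProductSpace 𝕜 E]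

theorem IsPositive.norm_le_of_reApplyInnerSelf_le {T S : E →L[𝕜] E} (hT : T.IsPositive)
    (h : ∀ x, T.reApplyInnerSelf x ≤ S.reApplyInnerSelf x) : ‖T‖ ≤ ‖S‖ := by
  rw [T.norm_eq_iSup_rayleighQuotient hT.isSymmetric]
  refine ciSup_le fun x => ?_
  calc |T.rayleighQuotient x| = T.rayleighQuotient x :=
        abs_of_nonneg (div_nonneg (hT.re_inner_nonneg_left x) (by positivity))
    _ ≤ S.rayleighQuotient x := div_le_div_of_nonneg_right (h x) (by positivity)
    _ ≤ ‖S‖ := (le_abs_self _).trans (S.rayleighQuotient_le_norm x)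

end ContinuousLinearMap

namespace Matrix

variable {ι κ : Type*} [Fintype ι] [Fintype κ]

theorem dotProduct_mul_mul_transpose_mulVec {R : Type*} [CommSemiring R]
    (L : Matrix ι κ R) (N : Matrix κ κ R) (x : ι → R) :
    x ⬝ᵥ (L * N * Lᵀ) *ᵥ x = (Lᵀ *ᵥ x) ⬝ᵥ N *ᵥ (Lᵀ *ᵥ x) := by
  rw [← mulVec_mulVec, ← mulVec_mulVec, dotProduct_mulVec x L, ← mulVec_transpose]

theorem PosSemidef.mul_mul_transpose_same {R : Type*} [Ring R] [PartialOrder R] [StarRing R]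
    [TrivialStar R] {N : Matrix κ κ R} (hN : N.PosSemidef) (L : Matrix ι κ R) :
    (L * N * Lᵀ).PosSemidef := by
  simpa only [conjTranspose_eq_transpose_of_trivial] using hN.mul_mul_conjTranspose_same L

theorem PosDef.dotProduct_inv_add_mulVec_le [DecidableEq ι] {M S : Matrix ι ι ℝ}
    (hM : M.PosDef) (hS : S.PosSemidef) (y : ι → ℝ) :
    y ⬝ᵥ (M + S)⁻¹ *ᵥ y ≤ y ⬝ᵥ M⁻¹ *ᵥ y := by
  set u := (M + S)⁻¹ *ᵥ y
  set z := M⁻¹ *ᵥ y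
  have hu : (M + S) *ᵥ u = y := by
    rw [mulVec_mulVec, mul_nonsing_inv _ ((hM.add_posSemidef hS).isUnit.map detMonoidHom),
      one_mulVec]
  have hz : M *ᵥ z = y := by
    rw [mulVec_mulVec, mul_nonsing_inv _ (hM.isUnit.map detMonoidHom), one_mulVec]
  have hM_symm : z ⬝ᵥ M *ᵥ u = u ⬝ᵥ M *ᵥ z := by
    rw [dotProduct_mulVec, ← mulVec_transpose, ← conjTranspose_eq_transpose_of_trivial,
      hM.isHermitian.eq, dotProduct_comm]
  -- `0 ≤ (u - z)ᵀ M (u - z) = uᵀ M u - 2 uᵀ y + yᵀ M⁻¹ y`, while `uᵀ y = uᵀ M u + uᵀ S u`.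
  have hdiff : 0 ≤ (u - z) ⬝ᵥ M *ᵥ (u - z) := hM.posSemidef.dotProduct_mulVec_nonneg _
  have hSu : 0 ≤ u ⬝ᵥ S *ᵥ u := hS.dotProduct_mulVec_nonneg u
  have huy : u ⬝ᵥ y = u ⬝ᵥ M *ᵥ u + u ⬝ᵥ S *ᵥ u := by
    rw [← hu, add_mulVec, dotProduct_add]
  rw [mulVec_sub, dotProduct_sub, sub_dotProduct, sub_dotProduct, hM_symm, hz] at hdiff
  rw [dotProduct_comm y u, dotProduct_comm y z]
  linarith [dotProduct_comm u y]

end Matrix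

theorem specNorm_add_le {n : ℕ} (S T : Matrix (Fin n) (Fin n) ℝ) :
    specNorm (S + T) ≤ specNorm S + specNorm T := by
  simpa only [specNorm, map_add] using norm_add_le _ _

theorem specNorm_le_of_dotProduct_mulVec_le {n : ℕ} {T S : Matrix (Fin n) (Fin n) ℝ}
    (hT : T.PosSemidef) (h : ∀ x, x ⬝ᵥ T *ᵥ x ≤ x ⬝ᵥ S *ᵥ x) : specNorm T ≤ specNorm S := by
  have hpos : (toEuclideanCLM (𝕜 := ℝ) T).IsPositive := by
    rw [← ContinuousLinearMap.isPositive_toLinearMap_iff, coe_toEuclideanCLM_eq_toEuclideanLin]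
    exact isPositive_toEuclideanLin_iff.mpr hT
  have hquad (M : Matrix (Fin n) (Fin n) ℝ) (x : EuclideanSpace ℝ (Fin n)) :
      (toEuclideanCLM (𝕜 := ℝ) M).reApplyInnerSelf x = x.ofLp ⬝ᵥ M *ᵥ x.ofLp := by
    rw [ContinuousLinearMap.reApplyInnerSelf_apply, RCLike.re_to_real, real_inner_comm,
      inner_toEuclideanCLM]
  exact hpos.norm_le_of_reApplyInnerSelf_le fun x => by simpa only [hquad] using h x.ofLp

theorem low_rank_sgs_norm_bound_general {n β : ℕ}
    (A D L : Matrix (Fin n) (Fin n) ℝ) (B : Matrix (Fin n) (Fin β) ℝ)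
    (Γ : Matrix (Fin β) (Fin β) ℝ)
    (hA : A.PosDef)
    (hDpd : D.PosDef)
    (hΓ : Γ.PosDef) :
    (∀ x : Fin n → ℝ,
        x ⬝ᵥ ((A + B * Γ⁻¹ * Bᵀ + L * (D + B * Γ⁻¹ * Bᵀ)⁻¹ * Lᵀ).mulVec x)
          ≤ x ⬝ᵥ ((B * Γ⁻¹ * Bᵀ).mulVec x) + x ⬝ᵥ ((A + L * D⁻¹ * Lᵀ).mulVec x)) ∧
      specNorm (A + B * Γ⁻¹ * Bᵀ + L * (D + B * Γ⁻¹ * Bᵀ)⁻¹ * Lᵀ)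
        ≤ specNorm (B * Γ⁻¹ * Bᵀ) + specNorm (A + L * D⁻¹ * Lᵀ) := by
  set S := B * Γ⁻¹ * Bᵀ
  have hS : S.PosSemidef := hΓ.inv.posSemidef.mul_mul_transpose_same B
  have hquad (x : Fin n → ℝ) :
      x ⬝ᵥ (A + S + L * (D + S)⁻¹ * Lᵀ) *ᵥ x ≤ x ⬝ᵥ S *ᵥ x + x ⬝ᵥ (A + L * D⁻¹ * Lᵀ) *ᵥ x := by
    simp only [add_mulVec, dotProduct_add, dotProduct_mul_mul_transpose_mulVec]
    linarith [hDpd.dotProduct_inv_add_mulVec_le hS (Lᵀ *ᵥ x)]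
  have hpsd : (A + S + L * (D + S)⁻¹ * Lᵀ).PosSemidef :=
    (hA.posSemidef.add hS).add ((hDpd.add_posSemidef hS).inv.posSemidef.mul_mul_transpose_same L)
  refine ⟨hquad, ?_⟩
  calc specNorm (A + S + L * (D + S)⁻¹ * Lᵀ) ≤ specNorm (S + (A + L * D⁻¹ * Lᵀ)) :=
        specNorm_le_of_dotProduct_mulVec_le hpsd fun x => by
          rw [add_mulVec S, dotProduct_add]; exact hquad x
    _ ≤ specNorm S + specNorm (A + L * D⁻¹ * Lᵀ) := specNorm_add_le _ _

/-- With `M^{SGS} = A + L D⁻¹ Lᵀ` and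
`M̃^{SGS} = A + B Γ⁻¹ Bᵀ + L (D + B Γ⁻¹ Bᵀ)⁻¹ Lᵀ`, for every `x`,
`xᵀ M̃^{SGS} x ≤ xᵀ B Γ⁻¹ Bᵀ x + xᵀ M^{SGS} x`, and consequently
`‖M̃^{SGS}‖₂ ≤ ‖B Γ⁻¹ Bᵀ‖₂ + ‖M^{SGS}‖₂`. -/
theorem low_rank_sgs_norm_bound {n β : ℕ}
    (A D L : Matrix (Fin n) (Fin n) ℝ) (B : Matrix (Fin n) (Fin β) ℝ)
    (Γ : Matrix (Fin β) (Fin β) ℝ)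
    (hA : A.PosDef) (hsplit : A = D + L + Lᵀ)
    (hD : D.IsDiag) (hDpd : D.PosDef)
    (hL : ∀ i j : Fin n, i ≤ j → L i j = 0)
    (hΓ : Γ.PosDef) (hΓs : Γ.IsSymm) :
    (∀ x : Fin n → ℝ,
        x ⬝ᵥ ((A + B * Γ⁻¹ * Bᵀ + L * (D + B * Γ⁻¹ * Bᵀ)⁻¹ * Lᵀ).mulVec x)
          ≤ x ⬝ᵥ ((B * Γ⁻¹ * Bᵀ).mulVec x) + x ⬝ᵥ ((A + L * D⁻¹ * Lᵀ).mulVec x)) ∧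
      specNorm (A + B * Γ⁻¹ * Bᵀ + L * (D + B * Γ⁻¹ * Bᵀ)⁻¹ * Lᵀ)
        ≤ specNorm (B * Γ⁻¹ * Bᵀ) + specNorm (A + L * D⁻¹ * Lᵀ) :=
  low_rank_sgs_norm_bound_general A D L B Γ hA hDpd hΓ
end
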